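/- For non-negative integers d, l, m, k with 2l ≤ m ≤ 2k and 0 ≤ d ≤ k+l−m, the sum over i from 0 to k+l−m−d of P((0,0),(i,i+d))·P((i+l,i+d+m−l),(k,k)) equals C(2k−m+1, k−m+l−d) − C(2k−m+1, k−m+l−d−1), where P(A,B) denotes the number of North/East lattice paths from A to B never going below the diagonal y=x. -/

import Mathlib

/-- Binomial coefficient `C(n,r)` for integer arguments, with the convention
that it is `0` when `r < 0` (and, via `Nat.choose`, when `r > n`). -/
def ibinom (n r : ℤ) : ℕ := if 0 ≤ r then n.toNat.choose r.toNat else 0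

/-- `L` (with `true` = North step `(0,1)`, `false` = East step `(1,0)`) is a
NE upper path from `(x1,y1)` to `(x2,y2)`: right step counts, never strictly
below the diagonal `y = x`. -/
def IsNEPath (x1 y1 x2 y2 : ℤ) (L : List Bool) : Prop :=
  ((L.count true : ℤ) = y2 - y1) ∧ ((L.count false : ℤ) = x2 - x1) ∧
  ∀ j : ℕ, x1 + ((L.take j).count false : ℤ) ≤ y1 + ((L.take j).count true : ℤ)

/-- `P (x1,y1) (x2,y2)`: the number of NE upper paths from `(x1,y1)` to `(x2,y2)`. -/
noncomputable def P (x1 y1 x2 y2 : ℤ) : ℕ :=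
  Nat.card {L : List Bool // IsNEPath x1 y1 x2 y2 L}



lemma count_tf (l : List Bool) : l.count true + l.count false = l.length := by
  induction l with
  | nil => simp
  | cons b t ih => cases b <;> simp [List.count_cons] <;> omega

lemma path_length {x1 y1 x2 y2 : ℤ} {L : List Bool} (h : IsNEPath x1 y1 x2 y2 L) :
    (L.length : ℤ) = (x2 - x1) + (y2 - y1) := by
  obtain ⟨h1, h2, _⟩ := h
  have := count_tf L
  omega

instance pathFinite (x1 y1 x2 y2 : ℤ) : Finite {L : List Bool // IsNEPath x1 y1 x2 y2 L} := by
  have h : {L : List Bool | IsNEPath x1 y1 x2 y2 L}.Finite :=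
    (List.finite_length_eq Bool ((x2 - x1 + (y2 - y1)).toNat)).subset
      (fun L hL => by
        have := path_length hL
        simp only [Set.mem_setOf_eq]
        omega)
  exact h.to_subtype

lemma P_eq_zero {x1 y1 x2 y2 : ℤ} (h : x2 < x1 ∨ y2 < y1 ∨ y2 < x2) : P x1 y1 x2 y2 = 0 := by
  have : IsEmpty {L : List Bool // IsNEPath x1 y1 x2 y2 L} := by
    constructor
    rintro ⟨L, h1, h2, h3⟩
    have h4 := h3 L.length
    rw [List.take_length] at h4
    have c1 : (0:ℤ) ≤ (L.count true : ℤ) := by positivity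
    have c2 : (0:ℤ) ≤ (L.count false : ℤ) := by positivity
    omega
  exact Nat.card_of_isEmpty

lemma path_nil_iff {x1 y1 : ℤ} (h : x1 ≤ y1) (L : List Bool) :
    IsNEPath x1 y1 x1 y1 L ↔ L = [] := by
  constructor
  · rintro ⟨h1, h2, _⟩
    have := count_tf L
    have : L.length = 0 := by omega
    exact List.length_eq_zero_iff.mp this
  · rintro rfl
    refine ⟨by simp, by simp, fun j => by simp [h]⟩

lemma P_refl {x1 y1 : ℤ} (h : x1 ≤ y1) : P x1 y1 x1 y1 = 1 := by
  haveI : Nonempty {L : List Bool // IsNEPath x1 y1 x1 y1 L} :=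
    ⟨⟨[], (path_nil_iff h []).mpr rfl⟩⟩
  haveI : Subsingleton {L : List Bool // IsNEPath x1 y1 x1 y1 L} := by
    constructor
    rintro ⟨a, ha⟩ ⟨b, hb⟩
    have := (path_nil_iff h a).mp ha
    have := (path_nil_iff h b).mp hb
    subst_eqs; rfl
  exact Nat.card_unique

lemma take_cond_concat {x1 y1 : ℤ} {L : List Bool} {b : Bool}
    (h : ∀ j : ℕ, x1 + ((L.take j).count false : ℤ) ≤ y1 + ((L.take j).count true : ℤ))
    (hend : x1 + (((L ++ [b]).count false : ℕ) : ℤ) ≤ y1 + (((L ++ [b]).count true : ℕ) : ℤ)) :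
    ∀ j : ℕ, x1 + (((L ++ [b]).take j).count false : ℤ) ≤
      y1 + (((L ++ [b]).take j).count true : ℤ) := by
  intro j
  rcases le_or_gt j L.length with hj | hj
  · rw [List.take_append_of_le_length hj]; exact h j
  · rw [List.take_of_length_le (by simp; omega)]; exact hend

lemma take_cond_of_concat {x1 y1 : ℤ} {L : List Bool} {b : Bool}
    (h : ∀ j : ℕ, x1 + (((L ++ [b]).take j).count false : ℤ) ≤
      y1 + (((L ++ [b]).take j).count true : ℤ)) :
    ∀ j : ℕ, x1 + ((L.take j).count false : ℤ) ≤ y1 + ((L.take j).count true : ℤ) := by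
  intro j
  rcases le_or_gt j L.length with hj | hj
  · have := h j; rwa [List.take_append_of_le_length hj] at this
  · rw [List.take_of_length_le (by omega)]
    have := h L.length
    rwa [List.take_append_of_le_length le_rfl, List.take_length] at this

lemma P_rec {x1 y1 x2 y2 : ℤ} (h0 : x1 ≤ y1) (hx : x1 ≤ x2) (hy : y1 ≤ y2) (hdiag : x2 ≤ y2)
    (hne : ¬(x2 = x1 ∧ y2 = y1)) :
    P x1 y1 x2 y2 = P x1 y1 (x2-1) y2 + P x1 y1 x2 (y2-1) := by
  classical
  rw [P, P, P, ← Nat.card_sum]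
  symm
  apply Nat.card_eq_of_bijective
    (Sum.elim
      (fun L : {L : List Bool // IsNEPath x1 y1 (x2-1) y2 L} =>
        (⟨L.1 ++ [false], by
          obtain ⟨c1, c2, c3⟩ := L.2
          have e1 : (((L.1 ++ [false]).count true : ℕ) : ℤ) = y2 - y1 := by
            simp [List.count_append]; omega
          have e2 : (((L.1 ++ [false]).count false : ℕ) : ℤ) = x2 - x1 := by
            simp [List.count_append]; omega
          exact ⟨e1, e2, take_cond_concat c3 (by rw [e1, e2]; omega)⟩⟩ :
          {L : List Bool // IsNEPath x1 y1 x2 y2 L}))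
      (fun L : {L : List Bool // IsNEPath x1 y1 x2 (y2-1) L} =>
        (⟨L.1 ++ [true], by
          obtain ⟨c1, c2, c3⟩ := L.2
          have e1 : (((L.1 ++ [true]).count true : ℕ) : ℤ) = y2 - y1 := by
            simp [List.count_append]; omega
          have e2 : (((L.1 ++ [true]).count false : ℕ) : ℤ) = x2 - x1 := by
            simp [List.count_append]; omega
          exact ⟨e1, e2, take_cond_concat c3 (by rw [e1, e2]; omega)⟩⟩ :
          {L : List Bool // IsNEPath x1 y1 x2 y2 L})))
  constructor
  · rintro (⟨a, ha⟩ | ⟨a, ha⟩) (⟨b, hb⟩ | ⟨b, hb⟩) hab <;>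
      simp only [Sum.elim_inl, Sum.elim_inr, Subtype.mk.injEq] at hab
    · exact congrArg Sum.inl (Subtype.ext (List.append_cancel_right hab))
    · exfalso; have := congrArg List.getLast? hab; simp at this
    · exfalso; have := congrArg List.getLast? hab; simp at this
    · exact congrArg Sum.inr (Subtype.ext (List.append_cancel_right hab))
  · rintro ⟨M, hM⟩
    have hlen : (M.length : ℤ) = x2 - x1 + (y2 - y1) := path_length hM
    have hMne : M ≠ [] := by
      intro h; subst h; simp at hlen; omega
    obtain ⟨L, b, rfl⟩ : ∃ L b, M = L ++ [b] :=
      ⟨M.dropLast, M.getLast hMne, (List.dropLast_append_getLast hMne).symm⟩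
    obtain ⟨c1, c2, c3⟩ := hM
    simp only [List.count_append] at c1 c2
    cases b
    · refine ⟨Sum.inl ⟨L, ?_, ?_, take_cond_of_concat c3⟩, rfl⟩
      · simp at c1 ⊢; omega
      · simp at c2 ⊢; omega
    · refine ⟨Sum.inr ⟨L, ?_, ?_, take_cond_of_concat c3⟩, rfl⟩
      · simp at c1 ⊢; omega
      · simp at c2 ⊢; omega



lemma ibinom_neg {n r : ℤ} (h : r < 0) : ibinom n r = 0 := by
  simp [ibinom, not_le.mpr h]

lemma ibinom_natCast (n r : ℕ) : ibinom (n : ℤ) (r : ℤ) = n.choose r := by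
  simp [ibinom]

lemma ibinom_pascal (n r : ℤ) (hn : 0 ≤ n) :
    ibinom (n + 1) r = ibinom n r + ibinom n (r - 1) := by
  rcases lt_or_ge r 0 with h | h
  · rw [ibinom_neg h, ibinom_neg h, ibinom_neg (by omega)]
  rcases eq_or_lt_of_le h with h0 | h0
  · subst_eqs
    simp [ibinom, ibinom_neg, show (0:ℤ)-1 < 0 by omega]
  · have h1 : (1:ℤ) ≤ r := by omega
    unfold ibinom
    rw [if_pos h, if_pos h, if_pos (by omega)]
    have e1 : (n+1).toNat = n.toNat + 1 := by omega
    have e2 : r.toNat = (r-1).toNat + 1 := by omega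
    rw [e1, e2, Nat.choose_succ_succ']
    omega

lemma ibinom_symm {n r : ℤ} (h0 : 0 ≤ r) (h1 : r ≤ n) : ibinom n r = ibinom n (n - r) := by
  unfold ibinom
  rw [if_pos h0, if_pos (by omega)]
  have : (n - r).toNat = n.toNat - r.toNat := by omega
  rw [this, Nat.choose_symm (by omega)]

/-- ballot number: paths (0,0) to (n, n+t) weakly above diagonal -/
def fb (t n : ℕ) : ℤ := (ibinom (2*n+t) n : ℤ) - ibinom (2*n+t) ((n:ℤ)-1)

lemma fb_zero (t : ℕ) : fb t 0 = 1 := by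
  simp [fb, ibinom_neg (show (0:ℤ)-1 < 0 by omega), ibinom]

lemma fb_rec (t n : ℕ) : fb (t+1) (n+1) = fb (t+2) n + fb t (n+1) := by
  unfold fb
  have e1 : (2*(n+1)+(t+1) : ℤ) = (2*n+(t+2)) + 1 := by push_cast; ring
  have e2 : (2*(n+1)+t : ℤ) = (2*n+(t+2)) := by push_cast; ring
  push_cast
  rw [show ((2:ℤ)*(↑n+1)+(↑t+1)) = (2*↑n+(↑t+2)) + 1 by ring,
      show ((2:ℤ)*(↑n+1)+↑t) = (2*↑n+(↑t+2)) by ring]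
  rw [ibinom_pascal _ _ (by positivity), ibinom_pascal _ ((n:ℤ)+1-1) (by positivity)]
  push_cast
  ring_nf

lemma fb_rec0 (n : ℕ) : fb 0 (n+1) = fb 1 n := by
  unfold fb
  rw [show ((2:ℤ)*(↑(n+1):ℤ)+(0:ℕ)) = (2*↑n+(1:ℕ)) + 1 by push_cast; ring]
  rw [ibinom_pascal _ _ (by positivity), ibinom_pascal _ ((↑(n+1):ℤ)-1) (by positivity)]
  have hsymm : ibinom (2*(n:ℤ)+(1:ℕ)) ((↑(n+1):ℤ)) = ibinom (2*(n:ℤ)+(1:ℕ)) ((n:ℤ)) := by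
    rw [ibinom_symm (by positivity) (by push_cast; omega)]
    norm_num
    congr 1
    push_cast; ring
  rw [hsymm]
  push_cast
  ring_nf

lemma fb_one (t : ℕ) : fb t 0 = 1 := fb_zero t

lemma fb_conv : ∀ N d s : ℕ, ∑ i ∈ Finset.range (N+1), fb d i * fb s (N - i) = fb (d+s+1) N := by
  intro N
  induction N using Nat.strong_induction_on with
  | _ N IH =>
    intro d s
    match N with
    | 0 => simp [fb_zero]
    | Nat.succ N =>
      induction s with
      | zero =>
        rw [Finset.sum_range_succ]
        rw [Finset.sum_congr rfl (fun i hi => by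
          simp only [Finset.mem_range] at hi
          rw [show N+1-i = (N-i)+1 from by omega, fb_rec0])]
        rw [IH N (by omega) d 1]
        have h1 := fb_rec d N
        simp only [Nat.sub_self, fb_zero]
        linarith
      | succ s ihs =>
        rw [Finset.sum_range_succ]
        rw [Finset.sum_congr rfl (fun i hi => by
          simp only [Finset.mem_range] at hi
          rw [show N+1-i = (N-i)+1 from by omega, fb_rec,
              show (N-i)+1 = N+1-i from by omega])]
        simp only [mul_add]
        rw [Finset.sum_add_distrib, IH N (by omega) d (s+2)]
        rw [Finset.sum_range_succ] at ihs
        have h1 := fb_rec (d+s+1) N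
        have h2 : d + (s+1) + 1 = (d+s+1)+1 := by ring
        have h3 : d + (s+2) + 1 = (d+s+1)+2 := by ring
        rw [h2, h3] at *
        simp only [Nat.sub_self, fb_zero] at *
        linarith

lemma ibinom_eq_zero_of_lt {n r : ℤ} (hr : 0 < r) (h : n < r) : ibinom n r = 0 := by
  unfold ibinom
  rw [if_pos hr.le]
  exact Nat.choose_eq_zero_of_lt (by omega)

def gfun (x1 y1 x2 y2 : ℤ) : ℤ :=
  (ibinom (x2 - x1 + (y2 - y1)) (x2 - x1) : ℤ) - ibinom (x2 - x1 + (y2 - y1)) (x2 - y1 - 1)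

lemma gfun_pascal {x1 y1 x2 y2 : ℤ} (h : 1 ≤ x2 - x1 + (y2 - y1)) :
    gfun x1 y1 x2 y2 = gfun x1 y1 (x2-1) y2 + gfun x1 y1 x2 (y2-1) := by
  unfold gfun
  rw [show x2 - x1 + (y2 - y1) = (x2 - 1 - x1 + (y2 - y1)) + 1 by ring,
      ibinom_pascal _ _ (by omega), ibinom_pascal _ _ (by omega),
      show x2 - x1 + (y2 - 1 - y1) = x2 - 1 - x1 + (y2 - y1) by ring,
      show x2 - x1 - 1 = x2 - 1 - x1 by ring,
      show x2 - y1 - 1 - 1 = x2 - 1 - y1 - 1 by ring]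
  push_cast
  ring

lemma P_closed : ∀ n : ℕ, ∀ x1 y1 x2 y2 : ℤ, x1 ≤ y1 → x1 ≤ x2 → y1 ≤ y2 → x2 ≤ y2 →
    (x2 - x1 + (y2 - y1)).toNat = n → (P x1 y1 x2 y2 : ℤ) = gfun x1 y1 x2 y2 := by
  intro n
  induction n using Nat.strong_induction_on with
  | _ n IH =>
    intro x1 y1 x2 y2 h0 hx hy hdiag hn
    by_cases hbase : x2 = x1 ∧ y2 = y1
    · rw [hbase.1, hbase.2, P_refl h0]
      unfold gfun
      rw [ibinom_neg (show x1 - y1 - 1 < 0 by omega)]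
      norm_num [ibinom]
    · have hstep := P_rec h0 hx hy hdiag hbase
      have hA : (P x1 y1 (x2-1) y2 : ℤ) = gfun x1 y1 (x2-1) y2 := by
        rcases le_or_gt x1 (x2-1) with h | h
        · exact IH ((x2-1-x1+(y2-y1)).toNat) (by omega) x1 y1 (x2-1) y2 h0 h hy (by omega) rfl
        · rw [P_eq_zero (Or.inl (by omega))]
          unfold gfun
          rw [ibinom_neg (by omega), ibinom_neg (by omega)]
          simp
      have hB : (P x1 y1 x2 (y2-1) : ℤ) = gfun x1 y1 x2 (y2-1) := by
        rcases le_or_gt x2 (y2-1) with h | h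
        · rcases le_or_gt y1 (y2-1) with h2 | h2
          · exact IH ((x2-x1+(y2-1-y1)).toNat) (by omega) x1 y1 x2 (y2-1) h0 hx h2 h rfl
          · have hy2 : y2 = y1 := by omega
            have hx2 : x2 ≠ x1 := fun hh => hbase ⟨hh, hy2⟩
            rw [P_eq_zero (Or.inr (Or.inl (by omega)))]
            unfold gfun
            rw [ibinom_neg (show x2 - y1 - 1 < 0 by omega),
                ibinom_eq_zero_of_lt (show (0:ℤ) < x2 - x1 by omega) (by omega)]
            simp
        · have hy2 : y2 = x2 := by omega
          rw [P_eq_zero (Or.inr (Or.inr (by omega)))]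
          unfold gfun
          rcases le_or_gt 0 (x2 - y1 - 1) with h2 | h2
          · rw [ibinom_symm (show (0:ℤ) ≤ x2-x1 by omega)
                (show x2-x1 ≤ x2-x1+(y2-1-y1) by omega),
              show x2-x1+(y2-1-y1) - (x2-x1) = x2-y1-1 by omega]
            simp
          · have ha : 0 < x2 - x1 := by
              rcases eq_or_lt_of_le hx with hh | hh
              · exfalso; exact hbase ⟨by omega, by omega⟩
              · omega
            rw [ibinom_neg h2, ibinom_eq_zero_of_lt ha (by omega)]
            simp
      rw [hstep]
      push_cast
      rw [hA, hB, ← gfun_pascal (by omega)]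

lemma T1 (d j : ℕ) : (P 0 0 (j:ℤ) ((j:ℤ) + d) : ℤ) = fb d j := by
  rw [P_closed (((j:ℤ) - 0 + ((j:ℤ) + d - 0)).toNat) 0 0 (j:ℤ) ((j:ℤ)+d)
      le_rfl (by positivity) (by positivity) (by omega) rfl]
  unfold gfun fb
  rw [show (j:ℤ) - 0 + ((j:ℤ) + d - 0) = 2*(j:ℤ)+(d:ℤ) by ring,
      show (j:ℤ) - 0 - 1 = (j:ℤ) - 1 by ring,
      show (j:ℤ) - 0 = (j:ℤ) by ring]

lemma T2 (k m l d j N' s : ℕ) (h1 : 2*l ≤ m) (hN' : (k:ℤ)+l-m-d = N')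
    (hs : (d:ℤ)+m-2*l = s) (hj : j ≤ N') :
    (P ((j:ℤ) + l) ((j:ℤ) + d + m - l) k k : ℤ) = fb s (N' - j) := by
  rw [P_closed (((k:ℤ) - ((j:ℤ)+l) + ((k:ℤ) - ((j:ℤ)+d+m-l))).toNat)
      ((j:ℤ)+l) ((j:ℤ)+d+m-l) k k (by omega) (by omega) (by omega) le_rfl rfl]
  unfold gfun fb
  rw [show (k:ℤ) - ((j:ℤ)+l) + ((k:ℤ) - ((j:ℤ)+d+m-l)) = 2*((N'-j : ℕ):ℤ)+(s:ℤ) by omega]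
  rw [ibinom_symm (show (0:ℤ) ≤ (k:ℤ) - ((j:ℤ)+l) by omega)
      (show (k:ℤ) - ((j:ℤ)+l) ≤ 2*((N'-j : ℕ):ℤ)+(s:ℤ) by omega)]
  rw [show 2*((N'-j : ℕ):ℤ)+(s:ℤ) - ((k:ℤ) - ((j:ℤ)+l)) = ((N'-j : ℕ) : ℤ) by omega,
      show (k:ℤ) - ((j:ℤ)+d+m-l) - 1 = ((N'-j : ℕ) : ℤ) - 1 by omega]

theorem stmt_8 (k m l d : ℕ) (h1 : 2 * l ≤ m) (h2 : m ≤ 2 * k)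
    (hd : (d : ℤ) ≤ (k : ℤ) + l - m) :
    (∑ i ∈ Finset.Icc (0 : ℤ) ((k : ℤ) + l - m - d),
        (P 0 0 i (i + d) : ℤ) * P (i + l) (i + d + m - l) k k) =
      (ibinom (2 * k - m + 1 : ℤ) ((k : ℤ) - m + l - d) : ℤ)
        - ibinom (2 * k - m + 1 : ℤ) ((k : ℤ) - m + l - d - 1) := by
  obtain ⟨N', hN'⟩ : ∃ N' : ℕ, (k:ℤ)+l-m-d = N' := ⟨((k:ℤ)+l-m-d).toNat, by omega⟩
  obtain ⟨s, hs⟩ : ∃ s : ℕ, (d:ℤ)+m-2*l = s := ⟨((d:ℤ)+m-2*l).toNat, by omega⟩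
  rw [show Finset.Icc (0:ℤ) ((k:ℤ)+l-m-d)
        = Finset.map ⟨fun n : ℕ => (n:ℤ), Nat.cast_injective⟩
            (Finset.range (N'+1)) from by
      ext a
      simp only [Finset.mem_Icc, Finset.mem_map, Finset.mem_range,
        Function.Embedding.coeFn_mk]
      constructor
      · intro ha
        exact ⟨a.toNat, by omega, by omega⟩
      · rintro ⟨b, hb, rfl⟩
        omega]
  rw [Finset.sum_map]
  simp only [Function.Embedding.coeFn_mk]
  rw [Finset.sum_congr rfl (fun j hj => by
    rw [T1 d j, T2 k m l d j N' s h1 hN' hs (by simp only [Finset.mem_range] at hj; omega)])]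
  rw [fb_conv]
  unfold fb
  rw [show ((d+s+1 : ℕ) : ℤ) = (d:ℤ)+s+1 by push_cast; ring,
      show 2*(N':ℤ)+((d:ℤ)+s+1) = 2*(k:ℤ)-m+1 by omega,
      show (N':ℤ) = (k:ℤ)-m+l-d by omega]
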